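/- arXiv:1807.08978 — 8 statements merged into one kernel-verified Lean document; each statement's English description precedes it below -/
import Mathlib

section
/- Let ω₀, ω₁, ω₂ ≥ 0, let φ be uniformly distributed on [0, 2π), and let G₁, G₂, G₃ be standard circularly-symmetric complex Gaussian random variables, with φ, G₁, G₂, G₃ mutually independent. Then the random variables |ω₀ e^{iφ} + ω₁ G₁ + ω₂ G₂ G₃| and |ω₀ e^{iφ} + ω₁ G₁ + ω₂ G₂ |G₃|| are identically distributed (so the SOSF signal can be generated from only two complex Gaussian variates and the nonnegative variate |G₃|). -/
/-!
Write the third Gaussian as `‖G₃‖ e^{iθ}` with `θ = arg G₃`. Multiplying the second Gaussian by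
the unit `e^{-iθ}` does not change the joint law of `(φ, G₁, G₂, G₃)`: a centred complex Gaussian
is invariant under rotations (its characteristic function `exp (-v‖t‖²/2)` depends only on `‖t‖`),
and `G₂` is independent of the rotation angle, which is a function of `G₃` alone. The substitution
turns `G₂ G₃` into `G₂ ‖G₃‖`.
-/

open MeasureTheory ProbabilityTheory Real Complex
open scoped ComplexConjugate

lemma charFun_map_mul_const (μ : Measure ℂ) (u t : ℂ) :
    charFun (μ.map (· * u)) t = charFun μ (t * conj u) := by
  rw [charFun_apply, integral_map (by fun_prop) (by fun_prop)]
  simp only [Complex.inner, charFun_apply, map_mul]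
  congr 1
  funext x
  ring_nf

/-- `v` is the variance of the real and imaginary parts, so the standard circularly-symmetric
complex Gaussian is `complexGaussian (1 / 2)`. -/
noncomputable def complexGaussian (v : NNReal) : Measure ℂ :=
  ((gaussianReal 0 v).prod (gaussianReal 0 v)).map (fun p => (p.1 : ℂ) + p.2 * I)

instance isProbabilityMeasure_complexGaussian (v : NNReal) :
    IsProbabilityMeasure (complexGaussian v) :=
  Measure.isProbabilityMeasure_map (by fun_prop)

lemma charFun_complexGaussian (v : NNReal) (t : ℂ) :
    charFun (complexGaussian v) t = cexp (-(v * ‖t‖ ^ 2) / 2) := by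
  have hinner (p : ℝ × ℝ) : cexp (inner ℝ ((p.1 : ℂ) + p.2 * I) t * I)
      = cexp (t.re * p.1 * I) * cexp (t.im * p.2 * I) := by
    rw [← Complex.exp_add, Complex.inner]
    congr 1
    simp [Complex.mul_re, add_mul]
  rw [complexGaussian, charFun_apply, integral_map (by fun_prop) (by fun_prop)]
  simp only [hinner]
  rw [integral_prod_mul (fun x : ℝ => cexp (t.re * x * I)) (fun y : ℝ => cexp (t.im * y * I))]
  have hre := charFun_gaussianReal (μ := 0) (v := v) t.re
  have him := charFun_gaussianReal (μ := 0) (v := v) t.im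
  simp only [charFun_apply_real] at hre him
  rw [hre, him, ← Complex.exp_add, ← ofReal_pow ‖t‖, ← Complex.normSq_eq_norm_sq,
    Complex.normSq_apply]
  congr 1
  push_cast
  ring

lemma IndepFun.map_add_mul_I_eq_complexGaussian {Ω : Type*} [MeasurableSpace Ω]
    {P : Measure Ω} [IsProbabilityMeasure P] {v : NNReal} {X Y : Ω → ℝ}
    (hX : Measurable X) (hY : Measurable Y) (hXY : IndepFun X Y P)
    (hXlaw : P.map X = gaussianReal 0 v) (hYlaw : P.map Y = gaussianReal 0 v) :
    P.map (fun ω => (X ω : ℂ) + Y ω * I) = complexGaussian v := by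
  have hlaw : P.map (fun ω => (X ω, Y ω)) = (gaussianReal 0 v).prod (gaussianReal 0 v) := by
    rw [(indepFun_iff_map_prod_eq_prod_map_map hX.aemeasurable hY.aemeasurable).mp hXY, hXlaw,
      hYlaw]
  rw [complexGaussian, ← hlaw, Measure.map_map (by fun_prop) (hX.prodMk hY)]
  rfl

def IsCircularlySymmetric (μ : Measure ℂ) : Prop :=
  ∀ u : ℂ, ‖u‖ = 1 → μ.map (· * u) = μ

lemma isCircularlySymmetric_complexGaussian (v : NNReal) :
    IsCircularlySymmetric (complexGaussian v) := by
  intro u hu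
  have : IsProbabilityMeasure ((complexGaussian v).map (· * u)) :=
    Measure.isProbabilityMeasure_map (by fun_prop)
  refine Measure.ext_of_charFun (funext fun t => ?_)
  rw [charFun_map_mul_const, charFun_complexGaussian, charFun_complexGaussian, norm_mul,
    Complex.norm_conj, hu, mul_one]

lemma Complex.exp_neg_arg_mul_I_mul_self (c : ℂ) : cexp (-(arg c) * I) * c = ‖c‖ := by
  calc cexp (-(arg c) * I) * c = cexp (-(arg c) * I) * (‖c‖ * cexp (arg c * I)) := by
        rw [norm_mul_exp_arg_mul_I]
    _ = ‖c‖ := by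
        rw [mul_left_comm, ← Complex.exp_add, neg_mul, neg_add_cancel, Complex.exp_zero, mul_one]

lemma measurePreserving_mul_exp_neg_arg {α : Type*} [MeasurableSpace α]
    (γ : Measure ℂ) (μ : Measure α) (β : Measure ℂ) [SFinite γ] [SFinite μ] [SFinite β]
    (hβ : IsCircularlySymmetric β) :
    MeasurePreserving (fun q : ℂ × α × ℂ => (q.1, q.2.1, q.2.2 * cexp (-(arg q.1) * I)))
      (γ.prod (μ.prod β)) (γ.prod (μ.prod β)) :=
  (MeasurePreserving.id γ).skew_product
    (g := fun (c : ℂ) (p : α × ℂ) => (p.1, p.2 * cexp (-(arg c) * I))) (by fun_prop) <|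
    ae_of_all _ fun c =>
    ((MeasurePreserving.id μ).prod
      ⟨by fun_prop, hβ _ (by simpa using norm_exp_ofReal_mul_I (-arg c))⟩).map_eq

theorem identDistrib_prodMk_mul_mul_norm {Ω α : Type*} [MeasurableSpace Ω] [MeasurableSpace α]
    {P : Measure Ω} [IsProbabilityMeasure P] {A : Ω → α} {B C : Ω → ℂ}
    (hA : Measurable A) (hB : Measurable B) (hC : Measurable C)
    (hAB : IndepFun A B P) (hABC : IndepFun (fun ω => (A ω, B ω)) C P)
    (hBsymm : IsCircularlySymmetric (P.map B)) :
    IdentDistrib (fun ω => (A ω, B ω * C ω)) (fun ω => (A ω, B ω * ‖C ω‖)) P P := by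
  have hV : MeasurePreserving (fun ω => (C ω, A ω, B ω)) P
      ((P.map C).prod ((P.map A).prod (P.map B))) := by
    refine ⟨hC.prodMk (hA.prodMk hB), ?_⟩
    rw [(indepFun_iff_map_prod_eq_prod_map_map hC.aemeasurable
        (hA.prodMk hB).aemeasurable).mp hABC.symm,
      (indepFun_iff_map_prod_eq_prod_map_map hA.aemeasurable hB.aemeasurable).mp hAB]
  have hSV := (measurePreserving_mul_exp_neg_arg _ _ _ hBsymm).comp hV
  let g : ℂ × α × ℂ → α × ℂ := fun q => (q.2.1, q.2.2 * q.1)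
  have hg : Measurable g := by fun_prop
  have hnorm : (fun ω => (A ω, B ω * ‖C ω‖))
      = g ∘ (fun q : ℂ × α × ℂ => (q.1, q.2.1, q.2.2 * cexp (-(arg q.1) * I)))
        ∘ (fun ω => (C ω, A ω, B ω)) := by
    funext ω
    simp only [g, Function.comp_apply, mul_assoc, exp_neg_arg_mul_I_mul_self]
  refine ⟨(hg.comp hV.measurable).aemeasurable, ?_, ?_⟩
  · rw [hnorm]
    exact (hg.comp hSV.measurable).aemeasurable
  · rw [hnorm, ← Measure.map_map hg hSV.measurable, hSV.map_eq, ← hV.map_eq,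
      Measure.map_map hg hV.measurable]
    rfl

theorem sosf_two_gaussians_general
    {Ω : Type*} [MeasurableSpace Ω] (P : Measure Ω) [IsProbabilityMeasure P]
    (ω₀ ω₁ ω₂ : ℝ)
    (φ : Ω → ℝ) (X Y : Fin 3 → Ω → ℝ)
    (hφm : Measurable φ) (hXm : ∀ i, Measurable (X i)) (hYm : ∀ i, Measurable (Y i))
    (hXlaw : ∀ i, P.map (X i) = gaussianReal 0 (1 / 2))
    (hYlaw : ∀ i, P.map (Y i) = gaussianReal 0 (1 / 2))
    (hindep : iIndepFun
      ![φ, X 0, Y 0, X 1, Y 1, X 2, Y 2] P)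
    (G : Fin 3 → Ω → ℂ) (hG : ∀ i ω, G i ω = (X i ω : ℂ) + (Y i ω : ℂ) * Complex.I) :
    P.map (fun ω => ‖
        ((ω₀ : ℂ) * Complex.exp ((φ ω : ℂ) * Complex.I) + (ω₁ : ℂ) * G 0 ω +
          (ω₂ : ℂ) * (G 1 ω * G 2 ω))‖)
      = P.map (fun ω => ‖
        ((ω₀ : ℂ) * Complex.exp ((φ ω : ℂ) * Complex.I) + (ω₁ : ℂ) * G 0 ω +
          (ω₂ : ℂ) * (G 1 ω * (‖G 2 ω‖ : ℂ)))‖) := by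
  have hfm : ∀ i, Measurable (![φ, X 0, Y 0, X 1, Y 1, X 2, Y 2] i) := by
    intro i
    fin_cases i <;> simp [hφm, hXm, hYm]
  obtain rfl : G = fun i ω => (X i ω : ℂ) + Y i ω * I := funext fun i => funext (hG i)
  have hAB : IndepFun (fun ω => (φ ω, (X 0 ω : ℂ) + Y 0 ω * I))
      (fun ω => (X 1 ω : ℂ) + Y 1 ω * I) P :=
    (hindep.indepFun_finset {0, 1, 2} {3, 4} (by decide) hfm).comp
      (φ := fun v : ({0, 1, 2} : Finset (Fin 7)) → ℝ =>
        (v ⟨0, by decide⟩, (v ⟨1, by decide⟩ : ℂ) + v ⟨2, by decide⟩ * I))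
      (ψ := fun v : ({3, 4} : Finset (Fin 7)) → ℝ => (v ⟨3, by decide⟩ : ℂ) + v ⟨4, by decide⟩ * I)
      (by fun_prop) (by fun_prop)
  have hABC : IndepFun (fun ω => ((φ ω, (X 0 ω : ℂ) + Y 0 ω * I), (X 1 ω : ℂ) + Y 1 ω * I))
      (fun ω => (X 2 ω : ℂ) + Y 2 ω * I) P :=
    (hindep.indepFun_finset {0, 1, 2, 3, 4} {5, 6} (by decide) hfm).comp
      (φ := fun v : ({0, 1, 2, 3, 4} : Finset (Fin 7)) → ℝ =>
        ((v ⟨0, by decide⟩, (v ⟨1, by decide⟩ : ℂ) + v ⟨2, by decide⟩ * I),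
          (v ⟨3, by decide⟩ : ℂ) + v ⟨4, by decide⟩ * I))
      (ψ := fun v : ({5, 6} : Finset (Fin 7)) → ℝ => (v ⟨5, by decide⟩ : ℂ) + v ⟨6, by decide⟩ * I)
      (by fun_prop) (by fun_prop)
  have hG₁ : P.map (fun ω => (X 1 ω : ℂ) + Y 1 ω * I) = complexGaussian (1 / 2) :=
    IndepFun.map_add_mul_I_eq_complexGaussian (hXm 1) (hYm 1)
      (by simpa using hindep.indepFun (show (3 : Fin 7) ≠ 4 by decide)) (hXlaw 1) (hYlaw 1)
  have key := identDistrib_prodMk_mul_mul_norm (by fun_prop) (by fun_prop) (by fun_prop) hAB hABC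
    (hG₁ ▸ isCircularlySymmetric_complexGaussian _)
  exact (key.comp (u := fun q : (ℝ × ℂ) × ℂ =>
    ‖(ω₀ : ℂ) * cexp (q.1.1 * I) + ω₁ * q.1.2 + ω₂ * q.2‖) (by fun_prop)).map_eq

/-- **SOSF signal generation from two complex Gaussians.** Let `ω₀, ω₁, ω₂ ≥ 0`, let `φ` be
uniform on `[0, 2π)`, and let `Gᵢ = Xᵢ + iYᵢ` (for `i = 0, 1, 2`) be standard
circularly-symmetric complex Gaussians (`Xᵢ, Yᵢ` independent real Gaussians of mean `0` and
variance `1/2`), with `φ, X₀, Y₀, X₁, Y₁, X₂, Y₂` mutually independent. Then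
`|ω₀ e^{iφ} + ω₁G₀ + ω₂G₁G₂|` and `|ω₀ e^{iφ} + ω₁G₀ + ω₂G₁|G₂||` are identically
distributed. -/
theorem sosf_two_gaussians
    {Ω : Type*} [MeasurableSpace Ω] (P : Measure Ω) [IsProbabilityMeasure P]
    (ω₀ ω₁ ω₂ : ℝ) (h₀ : 0 ≤ ω₀) (h₁ : 0 ≤ ω₁) (h₂ : 0 ≤ ω₂)
    (φ : Ω → ℝ) (X Y : Fin 3 → Ω → ℝ)
    (hφm : Measurable φ) (hXm : ∀ i, Measurable (X i)) (hYm : ∀ i, Measurable (Y i))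
    (hφlaw : P.map φ
      = (ENNReal.ofReal (2 * Real.pi))⁻¹ • volume.restrict (Set.Ico 0 (2 * Real.pi)))
    (hXlaw : ∀ i, P.map (X i) = gaussianReal 0 (1 / 2))
    (hYlaw : ∀ i, P.map (Y i) = gaussianReal 0 (1 / 2))
    (hindep : iIndepFun
      ![φ, X 0, Y 0, X 1, Y 1, X 2, Y 2] P)
    (G : Fin 3 → Ω → ℂ) (hG : ∀ i ω, G i ω = (X i ω : ℂ) + (Y i ω : ℂ) * Complex.I) :
    P.map (fun ω => ‖
        ((ω₀ : ℂ) * Complex.exp ((φ ω : ℂ) * Complex.I) + (ω₁ : ℂ) * G 0 ω +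
          (ω₂ : ℂ) * (G 1 ω * G 2 ω))‖)
      = P.map (fun ω => ‖
        ((ω₀ : ℂ) * Complex.exp ((φ ω : ℂ) * Complex.I) + (ω₁ : ℂ) * G 0 ω +
          (ω₂ : ℂ) * (G 1 ω * (‖G 2 ω‖ : ℂ)))‖) :=
  sosf_two_gaussians_general P ω₀ ω₁ ω₂ φ X Y hφm hXm hYm hXlaw hYlaw hindep G hG
end

section
/- Let μ ∈ ℂ and σ > 0, and let Z = X + iY where X and Y are independent real Gaussian random variables with mean 0 and variance σ²/2. Then the law of |μ + Z|² is absolutely continuous with respect to Lebesgue measure on (0, ∞), with density γ ↦ (1/σ²) e^{-(γ + |μ|²)/σ²} I₀(2|μ|√γ / σ²); equivalently, setting K = |μ|²/σ² and γ̄ = |μ|² + σ², the density is the Rician SNR density f_Rice(γ; K, γ̄). -/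
open MeasureTheory ProbabilityTheory Real

/-- Modified Bessel function of the first kind and order zero:
`I₀(z) = ∑_{k=0}^∞ (z²/4)^k / (k!)²`. -/
noncomputable def besselI0 (z : ℝ) : ℝ :=
  ∑' k : ℕ, (z ^ 2 / 4) ^ k / ((Nat.factorial k : ℝ)) ^ 2

/-- The Rician SNR density with Rician factor `K ≥ 0` and mean SNR `γ̄ > 0`:
`f_Rice(γ; K, γ̄) = ((1+K)/γ̄) e^{-K} e^{-(1+K)γ/γ̄} I₀(2√(K(1+K)γ/γ̄))`. -/
noncomputable def fRice (γ K γbar : ℝ) : ℝ :=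
  ((1 + K) / γbar) * Real.exp (-K) * Real.exp (-(1 + K) * γ / γbar) *
    besselI0 (2 * Real.sqrt (K * (1 + K) * γ / γbar))

/-! In polar coordinates `z = r e^{iθ}` the Gaussian density of `μ + Z` has exponent
`-(r² + |μ|²)/σ² + (2r|μ|/σ²) cos (θ - arg μ)`, so the angular integral is
`∫_{-π}^{π} e^{c cos θ} dθ = 2π I₀(c)`: expand the exponential and integrate termwise, the odd
powers of `cos` integrate to `0` and the even ones give the Wallis values
`2π (2k)! / (4^k (k!)²)`. The substitution `γ = r²` then turns the radial integral into the
density of `|μ + Z|²`. -/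

open Set
open scoped NNReal ENNReal Nat

@[fun_prop]
lemma measurable_besselI0 : Measurable besselI0 :=
  Measurable.tsum fun _ => by fun_prop

lemma integral_cos_pow_odd_neg_pi_pi (n : ℕ) : ∫ θ in -π..π, cos θ ^ (2 * n + 1) = 0 := by
  induction n with
  | zero => simp
  | succ n ih => rw [show 2 * (n + 1) + 1 = 2 * n + 1 + 2 by ring, integral_cos_pow, ih]; simp

lemma integral_cos_pow_even_neg_pi_pi (n : ℕ) :
    ∫ θ in -π..π, cos θ ^ (2 * n) = 2 * π * ((2 * n)! / (4 ^ n * (n ! : ℝ) ^ 2)) := by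
  induction n with
  | zero => simp [two_mul]
  | succ n ih =>
    rw [show 2 * (n + 1) = 2 * n + 1 + 1 by ring, integral_cos_pow, ih, Nat.factorial_succ,
      Nat.factorial_succ (2 * n), Nat.factorial_succ n]
    simp only [cos_pi, sin_pi, sin_neg, neg_zero, mul_zero, sub_self, zero_div, zero_add]
    push_cast
    field_simp
    ring

lemma hasSum_integral_exp_mul_cos (c : ℝ) :
    HasSum (fun n : ℕ => c ^ n / n ! * ∫ θ in -π..π, cos θ ^ n)
      (∫ θ in -π..π, exp (c * cos θ)) := by
  simp_rw [← intervalIntegral.integral_const_mul]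
  refine intervalIntegral.hasSum_integral_of_dominated_convergence (fun n _ => |c| ^ n / n !)
    (fun n => by fun_prop) (fun n => ae_of_all _ fun θ _ => ?_)
    (ae_of_all _ fun _ _ => Real.summable_pow_div_factorial |c|) intervalIntegrable_const
    (ae_of_all _ fun θ _ => ?_)
  · rw [norm_mul, Real.norm_eq_abs, Real.norm_eq_abs, abs_div, abs_pow, abs_pow, Nat.abs_cast]
    exact mul_le_of_le_one_right (by positivity) (pow_le_one₀ (abs_nonneg _) (abs_cos_le_one θ))
  · simpa [exp_eq_exp_ℝ, mul_pow, mul_div_right_comm] using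
      NormedSpace.expSeries_div_hasSum_exp (c * cos θ)

theorem integral_exp_mul_cos (c : ℝ) : ∫ θ in -π..π, exp (c * cos θ) = 2 * π * besselI0 c := by
  have h := hasSum_integral_exp_mul_cos c
  rw [← (mul_right_injective₀ (two_ne_zero (α := ℕ))).hasSum_iff] at h
  · rw [besselI0, ← tsum_mul_left, ← h.tsum_eq]
    congr 1 with k
    rw [Function.comp_apply, integral_cos_pow_even_neg_pi_pi, pow_mul, div_pow]
    field_simp
  · rintro n hn
    obtain ⟨k, rfl⟩ : Odd n := by simpa [Nat.not_even_iff_odd] using hn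
    rw [integral_cos_pow_odd_neg_pi_pi, mul_zero]

theorem integral_exp_mul_cos_sub (c α : ℝ) :
    ∫ θ in -π..π, exp (c * cos (θ - α)) = 2 * π * besselI0 c := by
  have hper : Function.Periodic (fun θ => exp (c * cos θ)) (2 * π) := fun θ => by simp
  rw [intervalIntegral.integral_comp_sub_right (fun θ => exp (c * cos θ)),
    show π - α = -π - α + 2 * π by ring, hper.intervalIntegral_add_eq (-π - α) (-π),
    show -π + 2 * π = π by ring, integral_exp_mul_cos]

theorem lintegral_Ioo_exp_mul_cos_sub (c α : ℝ) :
    ∫⁻ θ in Ioo (-π) π, ENNReal.ofReal (exp (c * cos (θ - α)))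
      = ENNReal.ofReal (2 * π * besselI0 c) := by
  rw [← integral_exp_mul_cos_sub c α, intervalIntegral.integral_of_le (by linarith [pi_pos]),
    integral_Ioc_eq_integral_Ioo, ofReal_integral_eq_lintegral_ofReal]
  · exact (by fun_prop : Continuous fun θ => exp (c * cos (θ - α))).integrableOn_Icc.mono_set
      Ioo_subset_Icc_self
  · exact ae_of_all _ fun θ => (exp_pos _).le

theorem lintegral_eq_lintegral_Ioi_lintegral_polar {f : ℝ × ℝ → ℝ≥0∞} (hf : Measurable f) :
    ∫⁻ p, f p
      = ∫⁻ r in Ioi 0, ∫⁻ θ in Ioo (-π) π, ENNReal.ofReal r * f (r * cos θ, r * sin θ) := by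
  rw [← lintegral_comp_polarCoord_symm, polarCoord_target, Measure.volume_eq_prod,
    ← Measure.prod_restrict, lintegral_prod _ (by fun_prop)]
  rfl

theorem lintegral_Ioi_eq_lintegral_Ioi_comp_sq (f : ℝ → ℝ≥0∞) :
    ∫⁻ γ in Ioi 0, f γ = ∫⁻ r in Ioi 0, ENNReal.ofReal (2 * r) * f (r ^ 2) := by
  have himage : (fun r : ℝ => r ^ 2) '' Ioi 0 = Ioi 0 := by
    refine Subset.antisymm ?_ fun γ hγ => ⟨√γ, sqrt_pos.2 hγ, sq_sqrt hγ.le⟩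
    rintro _ ⟨r, hr : 0 < r, rfl⟩
    exact pow_pos hr 2
  conv_lhs => rw [← himage, lintegral_image_eq_lintegral_abs_deriv_mul measurableSet_Ioi
    (fun r _ => by simpa using (hasDerivAt_pow 2 r).hasDerivWithinAt)
    ((pow_left_strictMonoOn₀ two_ne_zero).mono Ioi_subset_Ici_self).injOn]
  exact setLIntegral_congr_fun measurableSet_Ioi fun (r : ℝ) (hr : 0 < r) => by
    rw [abs_of_pos (mul_pos two_pos hr)]

lemma gaussianReal_prod_gaussianReal_eq_withDensity {v : ℝ≥0} (hv : v ≠ 0) :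
    (gaussianReal 0 v).prod (gaussianReal 0 v) = volume.withDensity
      (fun p : ℝ × ℝ => ENNReal.ofReal ((2 * π * v)⁻¹ * exp (-(p.1 ^ 2 + p.2 ^ 2) / (2 * v)))) := by
  rw [gaussianReal_of_var_ne_zero 0 hv, prod_withDensity (measurable_gaussianPDF 0 v)
    (measurable_gaussianPDF 0 v), ← Measure.volume_eq_prod]
  congr 1 with p
  rw [gaussianPDF_def, gaussianPDFReal_def, ← ENNReal.ofReal_mul (by positivity)]
  congr 1
  have hinv : (2 * π * v)⁻¹ = (√(2 * π * v))⁻¹ * (√(2 * π * v))⁻¹ := by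
    rw [← mul_inv, mul_self_sqrt (by positivity)]
  simp only [sub_zero]
  rw [hinv, neg_add, add_div, exp_add]
  ring

noncomputable def ricianPDF (μ : ℂ) (σ γ : ℝ) : ℝ :=
  (1 / σ ^ 2) * exp (-(γ + ‖μ‖ ^ 2) / σ ^ 2) * besselI0 (2 * ‖μ‖ * √γ / σ ^ 2)

lemma sq_mul_cos_sub_re_add_sq_mul_sin_sub_im (μ : ℂ) (r θ : ℝ) :
    (r * cos θ - μ.re) ^ 2 + (r * sin θ - μ.im) ^ 2
      = r ^ 2 + ‖μ‖ ^ 2 - 2 * r * ‖μ‖ * cos (θ - μ.arg) := by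
  rw [← Complex.norm_mul_cos_arg μ, ← Complex.norm_mul_sin_arg μ, cos_sub]
  linear_combination r ^ 2 * sin_sq_add_cos_sq θ + ‖μ‖ ^ 2 * sin_sq_add_cos_sq μ.arg

lemma lintegral_Ioo_polar_circularGaussian (μ : ℂ) {σ : ℝ} (hσ : 0 < σ) {r : ℝ} (hr : 0 ≤ r) :
    ∫⁻ θ in Ioo (-π) π, ENNReal.ofReal r * ENNReal.ofReal ((π * σ ^ 2)⁻¹ *
        exp (-((r * cos θ - μ.re) ^ 2 + (r * sin θ - μ.im) ^ 2) / σ ^ 2))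
      = ENNReal.ofReal (2 * r * ricianPDF μ σ (r ^ 2)) := by
  have hsplit : ∀ θ, r * ((π * σ ^ 2)⁻¹ *
        exp (-((r * cos θ - μ.re) ^ 2 + (r * sin θ - μ.im) ^ 2) / σ ^ 2))
      = r * (π * σ ^ 2)⁻¹ * exp (-(r ^ 2 + ‖μ‖ ^ 2) / σ ^ 2) *
          exp (2 * ‖μ‖ * r / σ ^ 2 * cos (θ - μ.arg)) := fun θ => by
    rw [sq_mul_cos_sub_re_add_sq_mul_sin_sub_im, mul_assoc _ (exp _), ← exp_add]
    ring_nf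
  have hradial : 0 ≤ r * (π * σ ^ 2)⁻¹ * exp (-(r ^ 2 + ‖μ‖ ^ 2) / σ ^ 2) := by positivity
  simp_rw [← ENNReal.ofReal_mul hr, hsplit, ENNReal.ofReal_mul hradial]
  rw [lintegral_const_mul' _ _ ENNReal.ofReal_ne_top, lintegral_Ioo_exp_mul_cos_sub,
    ← ENNReal.ofReal_mul (by positivity), ricianPDF, sqrt_sq hr]
  congr 1
  field_simp

theorem lintegral_circularGaussian_mul_comp_norm_add_sq (μ : ℂ) {σ : ℝ} (hσ : 0 < σ)
    {g : ℝ → ℝ≥0∞} (hg : Measurable g) :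
    ∫⁻ p : ℝ × ℝ, ENNReal.ofReal ((π * σ ^ 2)⁻¹ * exp (-(p.1 ^ 2 + p.2 ^ 2) / σ ^ 2)) *
        g (‖μ + (p.1 + p.2 * Complex.I)‖ ^ 2)
      = ∫⁻ γ in Ioi 0, ENNReal.ofReal (ricianPDF μ σ γ) * g γ := by
  rw [lintegral_Ioi_eq_lintegral_Ioi_comp_sq,
    ← lintegral_sub_right_eq_self _ ((μ.re, μ.im) : ℝ × ℝ),
    lintegral_eq_lintegral_Ioi_lintegral_polar (by fun_prop)]
  refine setLIntegral_congr_fun measurableSet_Ioi fun r (hr : 0 < r) => ?_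
  have hnorm : ∀ θ, ‖μ + ((r * cos θ - μ.re : ℝ) + (r * sin θ - μ.im : ℝ) * Complex.I)‖ ^ 2
      = r ^ 2 := fun θ => by
    simp only [Complex.sq_norm, Complex.normSq_apply, Complex.add_re, Complex.add_im,
      Complex.ofReal_re, Complex.ofReal_im, Complex.mul_re, Complex.mul_im, Complex.I_re,
      Complex.I_im]
    linear_combination r ^ 2 * cos_sq_add_sin_sq θ
  simp only [Prod.fst_sub, Prod.snd_sub, hnorm, ← mul_assoc]
  rw [lintegral_mul_const _ (by fun_prop), lintegral_Ioo_polar_circularGaussian μ hσ hr.le,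
    ENNReal.ofReal_mul (by positivity), mul_assoc]

theorem map_gaussianReal_prod_norm_add_sq (μ : ℂ) {σ : ℝ} (hσ : 0 < σ) :
    ((gaussianReal 0 (σ ^ 2 / 2).toNNReal).prod (gaussianReal 0 (σ ^ 2 / 2).toNNReal)).map
        (fun p : ℝ × ℝ => ‖μ + ((p.1 : ℂ) + (p.2 : ℂ) * Complex.I)‖ ^ 2)
      = volume.withDensity (fun γ => if 0 < γ then ENNReal.ofReal (ricianPDF μ σ γ) else 0) := by
  have hv : ((σ ^ 2 / 2).toNNReal : ℝ) = σ ^ 2 / 2 := Real.coe_toNNReal _ (by positivity)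
  rw [gaussianReal_prod_gaussianReal_eq_withDensity (by rw [← NNReal.coe_ne_zero, hv]; positivity)]
  refine Measure.ext_of_lintegral _ fun g hg => ?_
  have hgF : Measurable fun p : ℝ × ℝ => g (‖μ + ((p.1 : ℂ) + (p.2 : ℂ) * Complex.I)‖ ^ 2) :=
    hg.comp (by fun_prop)
  rw [lintegral_map hg (by fun_prop), lintegral_withDensity_eq_lintegral_mul _ (by fun_prop) hgF,
    lintegral_withDensity_eq_lintegral_mul _
      (Measurable.ite measurableSet_Ioi (by unfold ricianPDF; fun_prop) measurable_const) hg]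
  have h2v : 2 * ((σ ^ 2 / 2).toNNReal : ℝ) = σ ^ 2 := by rw [hv]; ring
  have h2πv : 2 * π * ((σ ^ 2 / 2).toNNReal : ℝ) = π * σ ^ 2 := by rw [hv]; ring
  simp only [Pi.mul_apply, h2v, h2πv]
  rw [lintegral_circularGaussian_mul_comp_norm_add_sq μ hσ hg,
    ← lintegral_indicator measurableSet_Ioi]
  refine lintegral_congr fun γ => ?_
  by_cases hγ : 0 < γ <;> simp [hγ]

lemma ricianPDF_eq_fRice (μ : ℂ) {σ : ℝ} (hσ : 0 < σ) {γ : ℝ} (hγ : 0 ≤ γ) :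
    ricianPDF μ σ γ = fRice γ (‖μ‖ ^ 2 / σ ^ 2) (‖μ‖ ^ 2 + σ ^ 2) := by
  have hscale : (1 + ‖μ‖ ^ 2 / σ ^ 2) / (‖μ‖ ^ 2 + σ ^ 2) = 1 / σ ^ 2 := by
    field_simp
    ring
  have hexp : -(‖μ‖ ^ 2 / σ ^ 2) + -(1 + ‖μ‖ ^ 2 / σ ^ 2) * γ / (‖μ‖ ^ 2 + σ ^ 2)
      = -(γ + ‖μ‖ ^ 2) / σ ^ 2 := by
    field_simp
    ring
  have harg : ‖μ‖ ^ 2 / σ ^ 2 * (1 + ‖μ‖ ^ 2 / σ ^ 2) * γ / (‖μ‖ ^ 2 + σ ^ 2)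
      = (‖μ‖ * √γ / σ ^ 2) ^ 2 := by
    rw [div_pow, mul_pow, sq_sqrt hγ]
    field_simp
    ring
  rw [fRice, hscale, harg, sqrt_sq (by positivity), mul_assoc (1 / σ ^ 2), ← exp_add, hexp,
    ricianPDF]
  ring_nf

/-- **Rician SNR density.** If `Z = X + iY` with `X, Y` independent real Gaussians of mean `0`
and variance `σ²/2`, then the law of `|μ + Z|²` has density
`γ ↦ (1/σ²) e^{-(γ+|μ|²)/σ²} I₀(2|μ|√γ/σ²)` on `(0, ∞)`; equivalently, with
`K = |μ|²/σ²` and `γ̄ = |μ|² + σ²`, this density is the Rician SNR density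
`f_Rice(γ; K, γ̄)`. -/
theorem rician_snr_density
    {Ω : Type*} [MeasurableSpace Ω] (P : Measure Ω) [IsProbabilityMeasure P]
    (μ : ℂ) (σ : ℝ) (hσ : 0 < σ)
    (X Y : Ω → ℝ) (hX : Measurable X) (hY : Measurable Y)
    (hlawX : P.map X = gaussianReal 0 (Real.toNNReal (σ ^ 2 / 2)))
    (hlawY : P.map Y = gaussianReal 0 (Real.toNNReal (σ ^ 2 / 2)))
    (hindep : IndepFun X Y P) :
    P.map (fun ω => ‖μ + ((X ω : ℂ) + (Y ω : ℂ) * Complex.I)‖ ^ 2)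
      = volume.withDensity
          (fun γ => if 0 < γ then
            ENNReal.ofReal ((1 / σ ^ 2) * Real.exp (-(γ + ‖μ‖ ^ 2) / σ ^ 2) *
              besselI0 (2 * ‖μ‖ * Real.sqrt γ / σ ^ 2))
          else 0)
    ∧ ∀ γ : ℝ, 0 < γ →
        (1 / σ ^ 2) * Real.exp (-(γ + ‖μ‖ ^ 2) / σ ^ 2) *
            besselI0 (2 * ‖μ‖ * Real.sqrt γ / σ ^ 2)
          = fRice γ (‖μ‖ ^ 2 / σ ^ 2) (‖μ‖ ^ 2 + σ ^ 2) := by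
  refine ⟨?_, fun γ hγ => ricianPDF_eq_fRice μ hσ hγ.le⟩
  have hlaw : P.map (fun ω => (X ω, Y ω))
      = (gaussianReal 0 (σ ^ 2 / 2).toNNReal).prod (gaussianReal 0 (σ ^ 2 / 2).toNNReal) := by
    rw [(indepFun_iff_map_prod_eq_prod_map_map hX.aemeasurable hY.aemeasurable).1 hindep,
      hlawX, hlawY]
  calc P.map _
      = (P.map fun ω => (X ω, Y ω)).map
          fun p : ℝ × ℝ => ‖μ + ((p.1 : ℂ) + (p.2 : ℂ) * Complex.I)‖ ^ 2 :=
        (Measure.map_map (by fun_prop) (by fun_prop)).symm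
    _ = _ := by
        rw [hlaw]
        exact map_gaussianReal_prod_norm_add_sq μ hσ
end

section
/- Let γ̄ > 0, s < 0, 0 < α ≤ 1 and β ≥ 0 with α + β ≤ 1. Then the moment generating function of the SOSF SNR, obtained by averaging the conditional Rician MGF over the exponential mixing variable, admits the closed form ∫₀^∞ (1/(1 - s γ̄ (1 - β - α(1 - x)))) e^{ s β γ̄ / (1 - s γ̄ (1 - β - α(1 - x))) } e^{-x} dx = -( e^{ (s γ̄ (1 - α - β) - 1)/(s γ̄ α) } / (s γ̄ α) ) · Γ(0, (s(1 - α - β)γ̄ - 1)/(s α γ̄), β/α). -/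
/-! The denominator `1 - sγ̄(1 - β - α(1 - x))` of the averaged Rician MGF is affine in `x`, so it
equals `B (x + c)` with `B = -sγ̄α`; the exponent `sβγ̄ / (B (x + c))` is then `-(β/α) / (x + c)`.
Writing `e^{-x} = e^{c} e^{-(x + c)}` and shifting `t = x + c` turns the average into
`(e^{c} / B) Γ(0, c, β/α)`. -/

open MeasureTheory Real

/-- Generalized incomplete gamma function `Γ(a, x, b) = ∫ₓ^∞ t^{a-1} e^{-t} e^{-b/t} dt`. -/
noncomputable def genGamma (a x b : ℝ) : ℝ :=
  ∫ t in Set.Ioi x, t ^ (a - 1) * Real.exp (-t) * Real.exp (-b / t)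

theorem setIntegral_Ioi_comp_add_right {E : Type*} [NormedAddCommGroup E] [NormedSpace ℝ E]
    (f : ℝ → E) (a c : ℝ) :
    ∫ x in Set.Ioi a, f (x + c) = ∫ t in Set.Ioi (a + c), f t := by
  rw [← (measurePreserving_add_right volume c).setIntegral_preimage_emb
    (measurableEmbedding_addRight c) f (Set.Ioi (a + c))]
  simp

theorem genGamma_zero_eq_integral_Ioi_zero (c b : ℝ) :
    genGamma 0 c b = ∫ x in Set.Ioi (0 : ℝ), (x + c)⁻¹ * exp (-(x + c)) * exp (-b / (x + c)) := by
  rw [genGamma, ← zero_add c, ← setIntegral_Ioi_comp_add_right, zero_add]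
  simp only [zero_sub, rpow_neg_one]

theorem integral_Ioi_affine_mgf_eq_genGamma (B c a : ℝ) :
    ∫ x in Set.Ioi (0 : ℝ), 1 / (B * (x + c)) * exp (a / (B * (x + c))) * exp (-x)
      = exp c / B * genGamma 0 c (-a / B) := by
  rw [genGamma_zero_eq_integral_Ioi_zero, ← integral_const_mul]
  congr 1 with x
  have hexp : exp (-x) = exp c * exp (-(x + c)) := by rw [← exp_add]; ring_nf
  simp only [hexp, neg_div, neg_neg, div_div, one_div, mul_inv]
  ring

theorem sosf_mgf_general (γbar s α β : ℝ) (hγbar : 0 < γbar) (hs : s < 0)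
    (hα0 : 0 < α) :
    ∫ x in Set.Ioi (0 : ℝ),
        (1 / (1 - s * γbar * (1 - β - α * (1 - x)))) *
          Real.exp (s * β * γbar / (1 - s * γbar * (1 - β - α * (1 - x)))) *
          Real.exp (-x)
      = -(Real.exp ((s * γbar * (1 - α - β) - 1) / (s * γbar * α)) / (s * γbar * α)) *
          genGamma 0 ((s * (1 - α - β) * γbar - 1) / (s * α * γbar)) (β / α) := by
  have hs' := hs.ne
  have hγbar' := hγbar.ne'
  have hα0' := hα0.ne'
  set c := (s * γbar * (1 - α - β) - 1) / (s * γbar * α) with hc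
  have hden : ∀ x : ℝ, 1 - s * γbar * (1 - β - α * (1 - x)) = -(s * γbar * α) * (x + c) := by
    intro x
    rw [hc]
    field_simp
    ring
  have harg : (s * (1 - α - β) * γbar - 1) / (s * α * γbar) = c := by ring
  have hb : -(s * β * γbar) / -(s * γbar * α) = β / α := by
    field_simp
  simp_rw [hden]
  rw [integral_Ioi_affine_mgf_eq_genGamma, harg, hb]
  ring

/-- **Closed form of the SOSF SNR MGF.** For `γ̄ > 0`, `s < 0`, `0 < α ≤ 1`, `β ≥ 0`
with `α + β ≤ 1`, the exponential average of the conditional Rician MGF equals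
`-( e^{(sγ̄(1-α-β)-1)/(sγ̄α)} / (sγ̄α) ) Γ(0, (s(1-α-β)γ̄-1)/(sαγ̄), β/α)`. -/
theorem sosf_mgf (γbar s α β : ℝ) (hγbar : 0 < γbar) (hs : s < 0)
    (hα0 : 0 < α) (hα1 : α ≤ 1) (hβ : 0 ≤ β) (hαβ : α + β ≤ 1) :
    ∫ x in Set.Ioi (0 : ℝ),
        (1 / (1 - s * γbar * (1 - β - α * (1 - x)))) *
          Real.exp (s * β * γbar / (1 - s * γbar * (1 - β - α * (1 - x)))) *
          Real.exp (-x)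
      = -(Real.exp ((s * γbar * (1 - α - β) - 1) / (s * γbar * α)) / (s * γbar * α)) *
          genGamma 0 ((s * (1 - α - β) * γbar - 1) / (s * α * γbar)) (β / α) :=
  sosf_mgf_general γbar s α β hγbar hs hα0
end

section
/- Let E and F be independent exponentially distributed random variables with rate 1. Then the law of the product E·F is absolutely continuous with respect to Lebesgue measure on (0, ∞), with density t ↦ 2 K₀(2√t). -/
/-!
By independence, the law of `E * F` is the image of `Exp(1) ⊗ Exp(1)` under multiplication.
Substituting `y = t / x` in the inner integral of `∫∫ g(xy) e^{-x-y} dy dx` and swapping the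
integrals exhibits the density `t ↦ ∫₀^∞ x⁻¹ e^{-x - t/x} dx`; the substitution `x = √t eᵘ`
turns it into `∫_ℝ e^{-2√t cosh u} du`, which is `2 K₀(2√t)` because `cosh` is even.
-/

open MeasureTheory ProbabilityTheory Real

/-- Modified Bessel function of the second kind and order zero:
`K₀(z) = ∫₀^∞ e^{-z cosh t} dt`. -/
noncomputable def besselK0 (z : ℝ) : ℝ :=
  ∫ t in Set.Ioi (0 : ℝ), Real.exp (-z * Real.cosh t)

open Set
open scoped ENNReal

lemma lintegral_comp_abs (f : ℝ → ℝ≥0∞) : ∫⁻ x, f |x| = 2 * ∫⁻ x in Ioi 0, f x := by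
  have hpos : ∫⁻ x in Ioi 0, f |x| = ∫⁻ x in Ioi 0, f x :=
    setLIntegral_congr_fun measurableSet_Ioi fun x hx => by rw [abs_of_pos hx]
  have hneg : ∫⁻ x in Iic 0, f |x| = ∫⁻ x in Ioi 0, f |x| := by
    have := (Measure.measurePreserving_neg volume).setLIntegral_comp_emb
      (Homeomorph.neg ℝ).measurableEmbedding (fun x => f |x|) (Ici 0)
    simpa only [abs_neg, image_neg_Ici, neg_zero, restrict_Ioi_eq_restrict_Ici] using this.symm
  rw [← lintegral_add_compl _ measurableSet_Ioi, compl_Ioi, hneg, hpos, two_mul]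

lemma lintegral_Ioi_comp_mul_left {a : ℝ} (ha : 0 < a) (g : ℝ → ℝ≥0∞) :
    ∫⁻ y in Ioi 0, g (a * y) = ENNReal.ofReal a⁻¹ * ∫⁻ t in Ioi 0, g t := by
  have h := lintegral_image_eq_lintegral_abs_deriv_mul (measurableSet_Ioi (a := 0))
    (fun y _ => ((hasDerivAt_id' y).const_mul a).hasDerivWithinAt)
    (mul_right_injective₀ ha.ne').injOn g
  rw [image_mul_left_Ioi ha, mul_zero] at h
  rw [h, ← lintegral_const_mul' _ _ ENNReal.ofReal_ne_top]
  refine setLIntegral_congr_fun measurableSet_Ioi fun y _ => ?_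
  rw [← mul_assoc, ← ENNReal.ofReal_mul (by positivity), mul_one, abs_of_pos ha,
    inv_mul_cancel₀ ha.ne', ENNReal.ofReal_one, one_mul]

@[fun_prop]
lemma measurable_besselK0 : Measurable besselK0 :=
  (Continuous.stronglyMeasurable (f := fun p : ℝ × ℝ => exp (-p.1 * cosh p.2))
    (by fun_prop)).integral_prod_right'.measurable

lemma integrableOn_exp_neg_mul_cosh {z : ℝ} (hz : 0 < z) :
    IntegrableOn (fun u => exp (-z * cosh u)) (Ioi 0) := by
  refine (exp_neg_integrableOn_Ioi 0 hz).mono' (by fun_prop) ?_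
  filter_upwards [ae_restrict_mem measurableSet_Ioi] with u hu
  rw [norm_of_nonneg (exp_pos _).le, exp_le_exp, neg_mul, neg_mul, neg_le_neg_iff]
  exact mul_le_mul_of_nonneg_left ((self_le_sinh_iff.2 hu.le).trans (sinh_lt_cosh u).le) hz.le

lemma ofReal_besselK0 {z : ℝ} (hz : 0 < z) :
    ENNReal.ofReal (besselK0 z) = ∫⁻ u in Ioi 0, ENNReal.ofReal (exp (-z * cosh u)) :=
  ofReal_integral_eq_lintegral_ofReal (integrableOn_exp_neg_mul_cosh hz)
    (.of_forall fun _ => (exp_pos _).le)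

lemma lintegral_exp_neg_mul_cosh {z : ℝ} (hz : 0 < z) :
    ∫⁻ u, ENNReal.ofReal (exp (-z * cosh u)) = ENNReal.ofReal (2 * besselK0 z) := by
  have h := lintegral_comp_abs fun u => ENNReal.ofReal (exp (-z * cosh u))
  simp only [cosh_abs] at h
  rw [h, ← ofReal_besselK0 hz, ENNReal.ofReal_mul zero_le_two, ENNReal.ofReal_ofNat]

lemma lintegral_exp_neg_add_div_div {t : ℝ} (ht : 0 < t) :
    ∫⁻ x in Ioi 0, ENNReal.ofReal (exp (-(x + t / x)) / x)
      = ENNReal.ofReal (2 * besselK0 (2 * √t)) := by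
  obtain ⟨c, hc, rfl⟩ : ∃ c, 0 < c ∧ t = c ^ 2 := ⟨√t, sqrt_pos.2 ht, (sq_sqrt ht.le).symm⟩
  rw [sqrt_sq hc.le]
  have himage : (fun u => c * exp u) '' univ = Ioi 0 := by
    rw [image_univ, range_comp' (c * ·) exp, range_exp, image_mul_left_Ioi hc, mul_zero]
  rw [← himage, lintegral_image_eq_lintegral_abs_deriv_mul MeasurableSet.univ
      (fun u _ => ((hasDerivAt_exp u).const_mul c).hasDerivWithinAt)
      ((mul_right_injective₀ hc.ne').comp exp_injective).injOn,
    setLIntegral_univ, ← lintegral_exp_neg_mul_cosh (by positivity)]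
  refine lintegral_congr fun u => ?_
  have hdiv : c ^ 2 / (c * exp u) = c * exp (-u) := by
    rw [exp_neg]; field_simp
  rw [← ENNReal.ofReal_mul (abs_nonneg _), abs_of_pos (by positivity), hdiv, cosh_eq]
  congr 1
  field_simp

lemma lintegral_expMeasure (r : ℝ) {g : ℝ → ℝ≥0∞} (hg : Measurable g) :
    ∫⁻ y, g y ∂expMeasure r = ∫⁻ y in Ioi 0, ENNReal.ofReal (r * exp (-(r * y))) * g y := by
  change ∫⁻ y, g y ∂volume.withDensity (exponentialPDF r) = _
  have hpdf : Measurable (exponentialPDF r) := (measurable_exponentialPDFReal r).ennreal_ofReal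
  rw [lintegral_withDensity_eq_lintegral_mul _ hpdf hg,
    restrict_Ioi_eq_restrict_Ici, ← lintegral_indicator measurableSet_Ici]
  refine lintegral_congr fun y => ?_
  by_cases hy : 0 ≤ y <;> simp [exponentialPDF_eq, hy]

lemma lintegral_expMeasure_comp_mul_left {x : ℝ} (hx : 0 < x) {g : ℝ → ℝ≥0∞}
    (hg : Measurable g) :
    ∫⁻ y, g (x * y) ∂expMeasure 1 = ∫⁻ t in Ioi 0, ENNReal.ofReal (exp (-(t / x)) / x) * g t := by
  rw [lintegral_expMeasure 1 (g := fun y => g (x * y)) (hg.comp (measurable_const_mul x))]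
  have := lintegral_Ioi_comp_mul_left hx fun t => ENNReal.ofReal (exp (-(t / x))) * g t
  simp only [mul_div_cancel_left₀ _ hx.ne'] at this
  simp only [one_mul, this, ← lintegral_const_mul' _ _ ENNReal.ofReal_ne_top, ← mul_assoc,
    ← ENNReal.ofReal_mul (inv_nonneg.2 hx.le), div_eq_inv_mul]

lemma lintegral_comp_mul_expMeasure_prod {g : ℝ → ℝ≥0∞} (hg : Measurable g) :
    ∫⁻ p, g (p.1 * p.2) ∂(expMeasure 1).prod (expMeasure 1)
      = ∫⁻ t in Ioi 0, ENNReal.ofReal (2 * besselK0 (2 * √t)) * g t := by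
  have := isProbabilityMeasure_expMeasure one_pos
  have hgmul : Measurable fun p : ℝ × ℝ => g (p.1 * p.2) := hg.comp measurable_mul
  have hkernel : Measurable fun p : ℝ × ℝ =>
      ENNReal.ofReal (exp (-(p.1 + p.2 / p.1)) / p.1) * g p.2 := by fun_prop
  calc ∫⁻ p, g (p.1 * p.2) ∂(expMeasure 1).prod (expMeasure 1)
      = ∫⁻ x in Ioi 0, ENNReal.ofReal (exp (-x)) * ∫⁻ y, g (x * y) ∂expMeasure 1 := by
        rw [lintegral_prod _ hgmul.aemeasurable, lintegral_expMeasure 1 hgmul.lintegral_prod_right']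
        simp only [one_mul]
    _ = ∫⁻ x in Ioi 0, ∫⁻ t in Ioi 0, ENNReal.ofReal (exp (-(x + t / x)) / x) * g t := by
        refine setLIntegral_congr_fun measurableSet_Ioi fun x hx => ?_
        rw [lintegral_expMeasure_comp_mul_left hx hg,
          ← lintegral_const_mul' _ _ ENNReal.ofReal_ne_top]
        simp only [← mul_assoc, ← ENNReal.ofReal_mul (exp_pos _).le, neg_add, exp_add,
          mul_div_assoc]
    _ = ∫⁻ t in Ioi 0, ∫⁻ x in Ioi 0, ENNReal.ofReal (exp (-(x + t / x)) / x) * g t :=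
        lintegral_lintegral_swap hkernel.aemeasurable
    _ = ∫⁻ t in Ioi 0, ENNReal.ofReal (2 * besselK0 (2 * √t)) * g t := by
        refine setLIntegral_congr_fun measurableSet_Ioi fun t ht => ?_
        rw [lintegral_mul_const _ (by fun_prop), lintegral_exp_neg_add_div_div ht]

lemma map_mul_expMeasure_prod :
    ((expMeasure 1).prod (expMeasure 1)).map (fun p : ℝ × ℝ => p.1 * p.2)
      = volume.withDensity
          (fun t => if 0 < t then ENNReal.ofReal (2 * besselK0 (2 * √t)) else 0) := by
  have hindicator : (fun t => if 0 < t then ENNReal.ofReal (2 * besselK0 (2 * √t)) else 0)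
      = (Ioi 0).indicator fun t => ENNReal.ofReal (2 * besselK0 (2 * √t)) := by
    ext t; simp [indicator_apply]
  refine Measure.ext_of_lintegral _ fun g hg => ?_
  rw [lintegral_map hg measurable_mul, lintegral_comp_mul_expMeasure_prod hg, hindicator,
    withDensity_indicator measurableSet_Ioi,
    lintegral_withDensity_eq_lintegral_mul _ (by fun_prop) hg]
  rfl

theorem product_exponential_density_general
    {Ω : Type*} [MeasurableSpace Ω] (P : Measure Ω)
    (E F : Ω → ℝ) (hE : Measurable E) (hF : Measurable F)
    (hlawE : P.map E = expMeasure 1) (hlawF : P.map F = expMeasure 1)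
    (hindep : IndepFun E F P) :
    P.map (fun ω => E ω * F ω)
      = volume.withDensity
          (fun t => if 0 < t then ENNReal.ofReal (2 * besselK0 (2 * Real.sqrt t)) else 0) := by
  have := isProbabilityMeasure_expMeasure one_pos
  have hjoint : P.map (fun ω => (E ω, F ω)) = (expMeasure 1).prod (expMeasure 1) := by
    rw [(indepFun_iff_map_prod_eq_prod_map_map' hE.aemeasurable hF.aemeasurable
      (hlawE ▸ inferInstance) (hlawF ▸ inferInstance)).1 hindep, hlawE, hlawF]
  rw [← map_mul_expMeasure_prod, ← hjoint, Measure.map_map measurable_mul (hE.prodMk hF)]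
  rfl

/-- The law of the product of two independent rate-one exponential random variables is
absolutely continuous with respect to Lebesgue measure on `(0, ∞)`, with density
`t ↦ 2 K₀(2√t)`. -/
theorem product_exponential_density
    {Ω : Type*} [MeasurableSpace Ω] (P : Measure Ω) [IsProbabilityMeasure P]
    (E F : Ω → ℝ) (hE : Measurable E) (hF : Measurable F)
    (hlawE : P.map E = expMeasure 1) (hlawF : P.map F = expMeasure 1)
    (hindep : IndepFun E F P) :
    P.map (fun ω => E ω * F ω)
      = volume.withDensity
          (fun t => if 0 < t then ENNReal.ofReal (2 * besselK0 (2 * Real.sqrt t)) else 0) :=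
  product_exponential_density_general P E F hE hF hlawE hlawF hindep
end

section
/- (Rayleigh and double-Rayleigh CDF) Let γ̄ > 0, 0 < α < 1 and γ > 0. Then ∫₀^∞ e^{-γ/((1 - α(1 - x)) γ̄)} e^{-x} dx = e^{(1-α)/α} Γ(1, (1-α)/α, γ/(α γ̄)); consequently the CDF of the RDR SNR distribution is F(γ) = 1 - e^{(1-α)/α} Γ(1, (1-α)/α, γ/(α γ̄)). -/
open MeasureTheory Real

/-!
Writing `c = (1 - α)/α`, the mean SNR of the mixture component is `γ̄ₓ = α γ̄ (x + c)`, so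
`e^{-x} e^{-γ/γ̄ₓ} = e^{c} · e^{-(x + c)} e^{-b/(x + c)}` with `b = γ/(α γ̄)`. Shifting `t = x + c`
turns the mixture integral into `e^{c} Γ(1, c, b)`. The CDF follows by subtracting from
`∫₀^∞ e^{-x} dx = 1`, the integrand being bounded by `e^{-x}`.
-/

theorem genGamma_one (x b : ℝ) :
    genGamma 1 x b = ∫ t in Set.Ioi x, exp (-t) * exp (-b / t) := by
  simp [genGamma]

theorem setIntegral_Ioi_zero_comp_add_right (f : ℝ → ℝ) (c : ℝ) :
    ∫ x in Set.Ioi 0, f (x + c) = ∫ t in Set.Ioi c, f t := by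
  simpa using (measurePreserving_add_right volume c).setIntegral_preimage_emb
    (measurableEmbedding_addRight c) f (Set.Ioi c)

theorem add_one_sub_div_self {α : ℝ} (hα : α ≠ 0) (x : ℝ) :
    x + (1 - α) / α = (1 - α * (1 - x)) / α := by
  field_simp
  ring

theorem div_mul_div_div_self {α : ℝ} (hα : α ≠ 0) (a g d : ℝ) :
    a / (α * g) / (d / α) = a / (d * g) := by
  rw [div_div_div_eq, mul_assoc, mul_comm a α, mul_div_mul_left _ _ hα, mul_comm g d]

theorem integral_exp_neg_div_mul_exp_neg {γbar α : ℝ} (hα : α ≠ 0) (γ : ℝ) :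
    ∫ x in Set.Ioi (0 : ℝ), exp (-γ / ((1 - α * (1 - x)) * γbar)) * exp (-x)
      = exp ((1 - α) / α) * genGamma 1 ((1 - α) / α) (γ / (α * γbar)) := by
  have h_integrand (x : ℝ) :
      exp (-γ / ((1 - α * (1 - x)) * γbar)) * exp (-x)
        = exp ((1 - α) / α) * (exp (-(x + (1 - α) / α))
            * exp (-(γ / (α * γbar)) / (x + (1 - α) / α))) := by
    have h_snr : γ / (α * γbar) / (x + (1 - α) / α) = γ / ((1 - α * (1 - x)) * γbar) := by
      rw [add_one_sub_div_self hα, div_mul_div_div_self hα]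
    rw [← exp_add, ← exp_add, ← exp_add, neg_div, neg_div, h_snr]
    congr 1
    ring
  simp_rw [h_integrand, integral_const_mul, genGamma_one,
    setIntegral_Ioi_zero_comp_add_right (fun t => exp (-t) * exp (-(γ / (α * γbar)) / t))]

theorem integral_one_sub_mul_exp_neg {f : ℝ → ℝ}
    (hf : IntegrableOn (fun x => f x * exp (-x)) (Set.Ioi 0)) :
    ∫ x in Set.Ioi (0 : ℝ), (1 - f x) * exp (-x) = 1 - ∫ x in Set.Ioi (0 : ℝ), f x * exp (-x) := by
  simp_rw [sub_mul, one_mul]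
  rw [integral_sub (integrableOn_exp_neg_Ioi 0) hf, integral_exp_neg_Ioi_zero]

theorem exp_neg_div_mixture_le_one {γbar α γ x : ℝ} (hγbar : 0 ≤ γbar) (hα0 : 0 ≤ α)
    (hα1 : α ≤ 1) (hγ : 0 ≤ γ) (hx : 0 ≤ x) :
    exp (-γ / ((1 - α * (1 - x)) * γbar)) ≤ 1 := by
  have h_denom : 0 ≤ 1 - α * (1 - x) := by nlinarith
  exact exp_le_one_iff.mpr (div_nonpos_of_nonpos_of_nonneg (by linarith) (by positivity))

/-- **Rayleigh and double-Rayleigh (RDR) CDF.** For `γ̄ > 0`, `0 < α < 1` and `γ > 0`, the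
exponential mixture of Rayleigh complementary CDFs satisfies
`∫₀^∞ e^{-γ/((1-α(1-x))γ̄)} e^{-x} dx = e^{(1-α)/α} Γ(1, (1-α)/α, γ/(αγ̄))`;
consequently the CDF of the RDR SNR distribution (the exponential mixture of the Rayleigh
CDFs `1 - e^{-γ/γ̄ₓ}`) equals `1 - e^{(1-α)/α} Γ(1, (1-α)/α, γ/(αγ̄))`. -/
theorem rdr_cdf (γbar α γ : ℝ) (hγbar : 0 < γbar) (hα0 : 0 < α) (hα1 : α < 1)
    (hγ : 0 < γ) :
    (∫ x in Set.Ioi (0 : ℝ),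
        Real.exp (-γ / ((1 - α * (1 - x)) * γbar)) * Real.exp (-x)
      = Real.exp ((1 - α) / α) * genGamma 1 ((1 - α) / α) (γ / (α * γbar))) ∧
    (∫ x in Set.Ioi (0 : ℝ),
        (1 - Real.exp (-γ / ((1 - α * (1 - x)) * γbar))) * Real.exp (-x)
      = 1 - Real.exp ((1 - α) / α) * genGamma 1 ((1 - α) / α) (γ / (α * γbar))) := by
  have h_mixture := integral_exp_neg_div_mul_exp_neg (γbar := γbar) hα0.ne' γ
  have h_integrable : IntegrableOn
      (fun x => exp (-γ / ((1 - α * (1 - x)) * γbar)) * exp (-x)) (Set.Ioi 0) := by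
    refine (integrableOn_exp_neg_Ioi 0).bdd_mul (c := 1)
      (Measurable.aestronglyMeasurable (by fun_prop)) ?_
    filter_upwards [ae_restrict_mem measurableSet_Ioi] with x hx
    rw [norm_of_nonneg (exp_pos _).le]
    exact exp_neg_div_mixture_le_one hγbar.le hα0.le hα1.le hγ.le hx.le
  exact ⟨h_mixture, by rw [integral_one_sub_mul_exp_neg h_integrable, h_mixture]⟩
end

section
/- (Double-Rayleigh plus LOS MGF) Let γ̄ > 0, 0 < α < 1 and s < 0. Then ∫₀^∞ (1/(1 - s γ̄ α x)) e^{ s (1-α) γ̄ / (1 - s γ̄ α x) } e^{-x} dx = -( e^{-1/(s γ̄ α)} / (s γ̄ α) ) Γ(0, -1/(s α γ̄), (1-α)/α). -/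
open MeasureTheory Real

/-!
With `c = -sγ̄α > 0` and `b = (1-α)/α` the denominator is `1 - sγ̄αx = c (x + 1/c)` and the
exponent is `-b / (x + 1/c)`, so the substitution `t = x + 1/c` turns the exponential mixture
into `Γ(0, 1/c, b)`, up to the factor `e^{1/c}/c` coming from `e^{-x} = e^{1/c} e^{-t}`.
-/

theorem genGamma_eq_integral_Ioi_add (a x₀ b : ℝ) :
    genGamma a x₀ b =
      ∫ x in Set.Ioi 0, (x + x₀) ^ (a - 1) * exp (-(x + x₀)) * exp (-b / (x + x₀)) := by
  rw [genGamma, ← (measurePreserving_add_right volume x₀).setIntegral_preimage_emb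
    (measurableEmbedding_addRight x₀), Set.preimage_add_const_Ioi, sub_self]

theorem integral_Ioi_one_add_mul_rpow_mul_exp_eq_genGamma (a b : ℝ) {c : ℝ} (hc : 0 < c) :
    ∫ x in Set.Ioi 0, (1 + c * x) ^ (a - 1) * exp (-(b * c) / (1 + c * x)) * exp (-x) =
      c ^ (a - 1) * exp (1 / c) * genGamma a (1 / c) b := by
  rw [genGamma_eq_integral_Ioi_add, ← integral_const_mul]
  refine setIntegral_congr_fun measurableSet_Ioi fun x (hx : 0 < x) => ?_
  have hshift : 1 + c * x = c * (x + 1 / c) := by field_simp; ring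
  have hexp : exp (-x) = exp (1 / c) * exp (-(x + 1 / c)) := by rw [← exp_add]; ring_nf
  rw [hshift, mul_rpow hc.le (by positivity), hexp, mul_comm b c, ← mul_neg,
    mul_div_mul_left _ _ hc.ne']
  ring

theorem drlos_mgf_general (γbar α s : ℝ) (hγbar : 0 < γbar) (hα0 : 0 < α)
    (hs : s < 0) :
    ∫ x in Set.Ioi (0 : ℝ),
        (1 / (1 - s * γbar * α * x)) *
          Real.exp (s * (1 - α) * γbar / (1 - s * γbar * α * x)) * Real.exp (-x)
      = -(Real.exp (-1 / (s * γbar * α)) / (s * γbar * α)) *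
          genGamma 0 (-1 / (s * α * γbar)) ((1 - α) / α) := by
  set c := -(s * γbar * α) with hc_def
  have hc : 0 < c := by have := mul_pos hγbar hα0; nlinarith
  have hbc : -((1 - α) / α * c) = s * (1 - α) * γbar := by rw [hc_def]; field_simp
  have hden (x : ℝ) : 1 - s * γbar * α * x = 1 + c * x := by rw [hc_def]; ring
  have hpref :
      -(exp (-1 / (s * γbar * α)) / (s * γbar * α)) = c ^ ((0 : ℝ) - 1) * exp (1 / c) := by
    rw [zero_sub, rpow_neg_one, hc_def, one_div_neg_eq_neg_one_div, ← neg_div _ (1 : ℝ)]; ring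
  have hlower : -1 / (s * α * γbar) = 1 / c := by rw [hc_def, one_div_neg_eq_neg_one_div]; ring
  simp_rw [hden, hpref, hlower, ← hbc,
    ← integral_Ioi_one_add_mul_rpow_mul_exp_eq_genGamma _ _ hc, zero_sub, rpow_neg_one, one_div]

/-- **Double-Rayleigh plus LOS (DRLOS) MGF.** For `γ̄ > 0`, `0 < α < 1` and `s < 0`,
`∫₀^∞ (1/(1 - sγ̄αx)) e^{s(1-α)γ̄/(1 - sγ̄αx)} e^{-x} dx
  = -( e^{-1/(sγ̄α)} / (sγ̄α) ) Γ(0, -1/(sαγ̄), (1-α)/α)`. -/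
theorem drlos_mgf (γbar α s : ℝ) (hγbar : 0 < γbar) (hα0 : 0 < α) (hα1 : α < 1)
    (hs : s < 0) :
    ∫ x in Set.Ioi (0 : ℝ),
        (1 / (1 - s * γbar * α * x)) *
          Real.exp (s * (1 - α) * γbar / (1 - s * γbar * α * x)) * Real.exp (-x)
      = -(Real.exp (-1 / (s * γbar * α)) / (s * γbar * α)) *
          genGamma 0 (-1 / (s * α * γbar)) ((1 - α) / α) :=
  drlos_mgf_general γbar α s hγbar hα0 hs
end

section
/- For every c > 0, ∫₀^∞ E₁(c/x) e^{-x} dx = 2 K₀(2√c). -/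
open MeasureTheory Real

/-- Exponential integral `E₁(x) = ∫ₓ^∞ t⁻¹ e^{-t} dt`. -/
noncomputable def expInt (x : ℝ) : ℝ :=
  ∫ t in Set.Ioi x, Real.exp (-t) / t

/-!
Write `E₁(c/x) = ∫ 1_{xt > c} e^{-t}/t dt` and swap the order of integration (Tonelli, the
integrand being nonnegative): the inner integral `∫_{x > c/t} e^{-x} dx = e^{-c/t}` leaves
`∫₀^∞ e^{-(t + c/t)} dt/t`. The substitution `t = √c eᵘ` turns `t + c/t` into `2√c cosh u`,
and evenness of `cosh` gives `2 K₀(2√c)`.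
-/

open Set

lemma setIntegral_Ioi_indicator_Ioi_of_le {E : Type*} [NormedAddCommGroup E] [NormedSpace ℝ E]
    {a b : ℝ} (hba : b ≤ a) (f : ℝ → E) :
    ∫ t in Ioi b, (Ioi a).indicator f t = ∫ t in Ioi a, f t := by
  rw [integral_indicator measurableSet_Ioi, Measure.restrict_restrict measurableSet_Ioi,
    Ioi_inter_Ioi, max_eq_left hba]

lemma exp_neg_div_div_le {c : ℝ} (hc : 0 < c) (t : ℝ) :
    exp (-(c / t)) / t ≤ exp (-1) / c := by
  calc exp (-(c / t)) / t = c / t * exp (-(c / t)) / c := by field_simp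
    _ ≤ exp (-1) / c := by gcongr; exact mul_exp_neg_le_exp_neg_one _

lemma integrableOn_exp_neg_add_div_div_self {c : ℝ} (hc : 0 < c) :
    IntegrableOn (fun t => exp (-(t + c / t)) / t) (Ioi 0) := by
  refine ((integrableOn_exp_neg_Ioi 0).mul_const (exp (-1) / c)).mono'
    (Measurable.aestronglyMeasurable (by fun_prop)) ?_
  filter_upwards [ae_restrict_mem measurableSet_Ioi] with t (ht : 0 < t)
  rw [norm_of_nonneg (by positivity), neg_add, exp_add, mul_div_assoc]
  exact mul_le_mul_of_nonneg_left (exp_neg_div_div_le hc t) (exp_pos _).le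

lemma integral_exp_neg_add_div_div_self {s : ℝ} (hs : 0 < s) :
    ∫ t in Ioi 0, exp (-(t + s ^ 2 / t)) / t = 2 * besselK0 (2 * s) := by
  have himage : (fun u => s * exp u) '' univ = Ioi 0 := by
    rw [image_univ, ← image_univ, ← image_image (s * ·) exp, image_univ, range_exp,
      image_mul_left_Ioi hs, mul_zero]
  have hsubst (u : ℝ) : |s * exp u| • (exp (-(s * exp u + s ^ 2 / (s * exp u))) / (s * exp u))
      = exp (-(2 * s) * cosh u) := by
    rw [smul_eq_mul, abs_of_pos (by positivity), mul_div_cancel₀ _ (by positivity), cosh_eq,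
      exp_neg u]
    field_simp
  calc ∫ t in Ioi 0, exp (-(t + s ^ 2 / t)) / t
      = ∫ u, |s * exp u| • (exp (-(s * exp u + s ^ 2 / (s * exp u))) / (s * exp u)) := by
        rw [← himage, integral_image_eq_integral_abs_deriv_smul MeasurableSet.univ
          (fun u _ => ((hasDerivAt_exp u).const_mul s).hasDerivWithinAt)
          (fun a _ b _ hab => exp_injective (mul_left_cancel₀ hs.ne' hab)), setIntegral_univ]
    _ = ∫ u, exp (-(2 * s) * cosh |u|) := by simp only [hsubst, cosh_abs]
    _ = 2 * besselK0 (2 * s) := by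
        rw [integral_comp_abs (f := fun u => exp (-(2 * s) * cosh u)), besselK0]

noncomputable def expIntKernel (c : ℝ) : ℝ × ℝ → ℝ :=
  {p : ℝ × ℝ | c < p.1 * p.2}.indicator fun p => exp (-p.1) * (exp (-p.2) / p.2)

section expIntKernel

variable {c : ℝ}

lemma measurable_expIntKernel : Measurable (expIntKernel c) :=
  (by fun_prop : Measurable fun p : ℝ × ℝ => exp (-p.1) * (exp (-p.2) / p.2)).indicator
    (measurableSet_lt measurable_const (measurable_fst.mul measurable_snd))

lemma expIntKernel_nonneg {p : ℝ × ℝ} (hp : 0 < p.2) : 0 ≤ expIntKernel c p := by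
  unfold expIntKernel indicator
  split_ifs <;> positivity

lemma expIntKernel_eq_indicator_of_fst_pos {x : ℝ} (hx : 0 < x) :
    (fun t => expIntKernel c (x, t)) =
      (Ioi (c / x)).indicator fun t => exp (-x) * (exp (-t) / t) := by
  ext t
  simp only [expIntKernel, indicator_apply, mem_ofPred_eq, mem_Ioi, div_lt_iff₀' hx]

lemma expIntKernel_eq_indicator_of_snd_pos {t : ℝ} (ht : 0 < t) :
    (fun x => expIntKernel c (x, t)) =
      (Ioi (c / t)).indicator fun x => exp (-x) * (exp (-t) / t) := by
  ext x
  simp only [expIntKernel, indicator_apply, mem_ofPred_eq, mem_Ioi, div_lt_iff₀ ht]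

lemma integral_expIntKernel_of_fst_pos (hc : 0 < c) {x : ℝ} (hx : 0 < x) :
    ∫ t in Ioi 0, expIntKernel c (x, t) = exp (-x) * expInt (c / x) := by
  rw [expIntKernel_eq_indicator_of_fst_pos hx, setIntegral_Ioi_indicator_Ioi_of_le
    (by positivity), integral_const_mul, expInt]

lemma integral_expIntKernel_of_snd_pos (hc : 0 < c) {t : ℝ} (ht : 0 < t) :
    ∫ x in Ioi 0, expIntKernel c (x, t) = exp (-(t + c / t)) / t := by
  rw [expIntKernel_eq_indicator_of_snd_pos ht, setIntegral_Ioi_indicator_Ioi_of_le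
    (by positivity), integral_mul_const, integral_exp_neg_Ioi, neg_add, exp_add]
  ring

lemma integrable_expIntKernel (hc : 0 < c) :
    Integrable (expIntKernel c) ((volume.restrict (Ioi 0)).prod (volume.restrict (Ioi 0))) := by
  rw [integrable_prod_iff' measurable_expIntKernel.aestronglyMeasurable]
  constructor
  · filter_upwards [ae_restrict_mem measurableSet_Ioi] with t (ht : 0 < t)
    rw [expIntKernel_eq_indicator_of_snd_pos ht]
    exact ((integrable_indicator_iff measurableSet_Ioi).2
      ((integrableOn_exp_neg_Ioi _).mul_const _)).restrict
  · refine (integrableOn_exp_neg_add_div_div_self hc).congr ?_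
    filter_upwards [ae_restrict_mem measurableSet_Ioi] with t (ht : 0 < t)
    rw [← integral_expIntKernel_of_snd_pos hc ht]
    exact integral_congr_ae (ae_of_all _ fun x => (norm_of_nonneg (expIntKernel_nonneg ht)).symm)

lemma integral_expInt_div_mul_exp_neg (hc : 0 < c) :
    ∫ x in Ioi 0, expInt (c / x) * exp (-x) = ∫ t in Ioi 0, exp (-(t + c / t)) / t :=
  calc ∫ x in Ioi 0, expInt (c / x) * exp (-x)
      = ∫ x in Ioi 0, ∫ t in Ioi 0, expIntKernel c (x, t) :=
        setIntegral_congr_fun measurableSet_Ioi fun x hx => by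
          rw [integral_expIntKernel_of_fst_pos hc hx, mul_comm]
    _ = ∫ t in Ioi 0, ∫ x in Ioi 0, expIntKernel c (x, t) :=
        integral_integral_swap (integrable_expIntKernel hc)
    _ = ∫ t in Ioi 0, exp (-(t + c / t)) / t :=
        setIntegral_congr_fun measurableSet_Ioi fun t ht => integral_expIntKernel_of_snd_pos hc ht

end expIntKernel

/-- For every `c > 0`, `∫₀^∞ E₁(c/x) e^{-x} dx = 2 K₀(2√c)`. -/
theorem integral_expInt_div (c : ℝ) (hc : 0 < c) :
    ∫ x in Set.Ioi (0 : ℝ), expInt (c / x) * Real.exp (-x)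
      = 2 * besselK0 (2 * Real.sqrt c) := by
  rw [integral_expInt_div_mul_exp_neg hc, ← integral_exp_neg_add_div_div_self (sqrt_pos.2 hc),
    sq_sqrt hc.le]
end

section
/- For every α with 0 < α < 1, ∫₀^∞ ln(1 - α(1 - x)) e^{-x} dx = ln(1 - α) + e^{(1-α)/α} E₁( (1-α)/α ). -/
/-!
With `c = (1 - α) / α` one has `1 - α(1 - x) = α(x + c)`, so the integrand splits as
`log α · e^{-x} + log(x + c) · e^{-x}`. The second part integrates by parts:
`-log(x + c) e^{-x} - e^c E₁(x + c)` is a primitive of it (as `E₁' (y) = -e^{-y}/y`), tends to `0`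
at infinity, and equals `-log c - e^c E₁(c)` at `0`. Finally `log α + log c = log(1 - α)`.
-/

open MeasureTheory Real Set Filter Topology

lemma continuousOn_exp_neg_div : ContinuousOn (fun t : ℝ => exp (-t) / t) (Ioi 0) :=
  (continuous_exp.comp continuous_neg).continuousOn.div continuousOn_id fun _ ht => ht.ne'

lemma integrableOn_exp_neg_div_Ioi {a : ℝ} (ha : 0 < a) :
    IntegrableOn (fun t => exp (-t) / t) (Ioi a) := by
  refine ((integrableOn_exp_neg_Ioi a).const_mul a⁻¹).mono' ?_ ?_
  · exact (continuousOn_exp_neg_div.mono (Ioi_subset_Ioi ha.le)).aestronglyMeasurable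
      measurableSet_Ioi
  · filter_upwards [ae_restrict_mem measurableSet_Ioi] with t (ht : a < t)
    rw [norm_of_nonneg (div_nonneg (exp_pos _).le (ha.trans ht).le), div_eq_inv_mul]
    gcongr

lemma expInt_eq_sub_intervalIntegral {a x : ℝ} (ha : 0 < a) (hax : a ≤ x) :
    expInt x = expInt a - ∫ t in a..x, exp (-t) / t := by
  rw [← intervalIntegral.integral_Ioi_sub_Ioi (integrableOn_exp_neg_div_Ioi ha) hax, expInt,
    expInt, sub_sub_cancel]

theorem hasDerivAt_expInt {x : ℝ} (hx : 0 < x) : HasDerivAt expInt (-(exp (-x) / x)) x := by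
  have hprimitive : HasDerivAt (fun y => ∫ t in x / 2..y, exp (-t) / t) (exp (-x) / x) x := by
    refine intervalIntegral.integral_hasDerivAt_right ?_ ?_
      (continuousOn_exp_neg_div.continuousAt (Ioi_mem_nhds hx))
    · rw [intervalIntegrable_iff_integrableOn_Ioc_of_le (half_le_self hx.le)]
      exact (integrableOn_exp_neg_div_Ioi (half_pos hx)).mono_set Ioc_subset_Ioi_self
    · exact continuousOn_exp_neg_div.stronglyMeasurableAtFilter isOpen_Ioi x hx
  refine (hprimitive.const_sub (expInt (x / 2))).congr_of_eventuallyEq ?_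
  filter_upwards [Ioi_mem_nhds (half_lt_self hx)] with y hy
  exact expInt_eq_sub_intervalIntegral (half_pos hx) hy.le

lemma expInt_nonneg {x : ℝ} (hx : 0 < x) : 0 ≤ expInt x :=
  setIntegral_nonneg measurableSet_Ioi fun _ ht => div_nonneg (exp_pos _).le (hx.trans ht).le

lemma expInt_le_exp_neg {x : ℝ} (hx : 1 ≤ x) : expInt x ≤ exp (-x) := by
  rw [← integral_exp_neg_Ioi]
  refine setIntegral_mono_on (integrableOn_exp_neg_div_Ioi (by linarith))
    (integrableOn_exp_neg_Ioi x) measurableSet_Ioi fun t ht => ?_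
  exact div_le_self (exp_pos _).le (hx.trans ht.le)

lemma tendsto_expInt_atTop : Tendsto expInt atTop (𝓝 0) :=
  squeeze_zero' ((eventually_gt_atTop 0).mono fun _ => expInt_nonneg)
    ((eventually_ge_atTop 1).mono fun _ => expInt_le_exp_neg) tendsto_exp_neg_atTop_nhds_zero

lemma abs_log_add_le {c x : ℝ} (hc : 0 < c) (hx : 0 ≤ x) : |log (x + c)| ≤ |log c| + x / c := by
  have hxc : 0 < x + c := by linarith
  have hlower : log c ≤ log (x + c) := log_le_log hc (by linarith)
  have hupper : log (x + c) - log c ≤ x / c := by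
    rw [← log_div hxc.ne' hc.ne']
    calc log ((x + c) / c) ≤ (x + c) / c - 1 := log_le_sub_one_of_pos (by positivity)
      _ = x / c := by field_simp; ring
  have hratio : 0 ≤ x / c := by positivity
  rw [abs_le]
  constructor <;> linarith [le_abs_self (log c), neg_abs_le (log c)]

section

variable {c : ℝ}

lemma norm_log_add_mul_exp_neg_le (hc : 0 < c) {x : ℝ} (hx : 0 ≤ x) :
    ‖log (x + c) * exp (-x)‖ ≤ |log c| * exp (-x) + c⁻¹ * (x * exp (-x)) := by
  rw [norm_mul, norm_of_nonneg (exp_pos _).le, norm_eq_abs]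
  calc |log (x + c)| * exp (-x) ≤ (|log c| + x / c) * exp (-x) := by
        gcongr; exact abs_log_add_le hc hx
    _ = |log c| * exp (-x) + c⁻¹ * (x * exp (-x)) := by ring

lemma integrableOn_log_add_mul_exp_neg (hc : 0 < c) :
    IntegrableOn (fun x => log (x + c) * exp (-x)) (Ioi 0) := by
  have hmoment : IntegrableOn (fun x : ℝ => x * exp (-x)) (Ioi 0) := by
    simpa using integrableOn_rpow_mul_exp_neg_rpow (s := 1) (p := 1) (by norm_num) one_pos
  refine (((integrableOn_exp_neg_Ioi 0).const_mul |log c|).add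
    (hmoment.const_mul c⁻¹)).mono' ?_ ?_
  · refine ContinuousOn.aestronglyMeasurable ?_ measurableSet_Ioi
    refine ((continuous_add_const c).continuousOn.log fun x (hx : 0 < x) => ?_).mul
      (continuous_exp.comp continuous_neg).continuousOn
    exact (add_pos hx hc).ne'
  · filter_upwards [ae_restrict_mem measurableSet_Ioi] with x (hx : 0 < x)
    exact norm_log_add_mul_exp_neg_le hc hx.le

lemma tendsto_log_add_mul_exp_neg (hc : 0 < c) :
    Tendsto (fun x => log (x + c) * exp (-x)) atTop (𝓝 0) := by
  have hbound : Tendsto (fun x => |log c| * exp (-x) + c⁻¹ * (x * exp (-x))) atTop (𝓝 0) := by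
    simpa using (tendsto_exp_neg_atTop_nhds_zero.const_mul |log c|).add
      ((by simpa using tendsto_pow_mul_exp_neg_atTop_nhds_zero 1 :
        Tendsto (fun x : ℝ => x * exp (-x)) atTop (𝓝 0)).const_mul c⁻¹)
  refine squeeze_zero_norm' ?_ hbound
  filter_upwards [eventually_ge_atTop 0] with x hx using norm_log_add_mul_exp_neg_le hc hx

lemma hasDerivAt_log_add_mul_exp_neg_primitive {x : ℝ} (hxc : 0 < x + c) :
    HasDerivAt (fun y => -(log (y + c) * exp (-y)) - exp c * expInt (y + c))
      (log (x + c) * exp (-x)) x := by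
  have hlog : HasDerivAt (fun y => log (y + c)) (x + c)⁻¹ x := by
    simpa using ((hasDerivAt_id x).add_const c).log hxc.ne'
  have hexp : HasDerivAt (fun y => exp (-y)) (-exp (-x)) x := by
    simpa using (hasDerivAt_neg x).exp
  have hE₁ : HasDerivAt (fun y => expInt (y + c)) (-(exp (-(x + c)) / (x + c))) x :=
    (hasDerivAt_expInt hxc).comp_add_const x c
  refine (((hlog.mul hexp).neg).sub (hE₁.const_mul (exp c))).congr_deriv ?_
  rw [exp_neg (x + c), exp_add, exp_neg]
  field_simp
  ring

theorem integral_log_add_mul_exp_neg (hc : 0 < c) :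
    ∫ x in Ioi 0, log (x + c) * exp (-x) = log c + exp c * expInt c := by
  have hprimitive_tendsto : Tendsto (fun y => -(log (y + c) * exp (-y)) - exp c * expInt (y + c))
      atTop (𝓝 0) := by
    simpa using (tendsto_log_add_mul_exp_neg hc).neg.sub
      ((tendsto_expInt_atTop.comp (tendsto_atTop_add_const_right atTop c tendsto_id)).const_mul
        (exp c))
  rw [integral_Ioi_of_hasDerivAt_of_tendsto'
    (fun x (hx : 0 ≤ x) => hasDerivAt_log_add_mul_exp_neg_primitive (by linarith))
    (integrableOn_log_add_mul_exp_neg hc) hprimitive_tendsto]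
  simp [add_comm]

end

/-- For every `0 < α < 1`,
`∫₀^∞ ln(1 - α(1-x)) e^{-x} dx = ln(1-α) + e^{(1-α)/α} E₁((1-α)/α)`. -/
theorem integral_log_rdr (α : ℝ) (hα0 : 0 < α) (hα1 : α < 1) :
    ∫ x in Set.Ioi (0 : ℝ), Real.log (1 - α * (1 - x)) * Real.exp (-x)
      = Real.log (1 - α) + Real.exp ((1 - α) / α) * expInt ((1 - α) / α) := by
  set c := (1 - α) / α
  have hc : 0 < c := div_pos (by linarith) hα0
  have hαc : α * c = 1 - α := mul_div_cancel₀ _ hα0.ne'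
  have hintegrand : EqOn (fun x => log (1 - α * (1 - x)) * exp (-x))
      (fun x => log α * exp (-x) + log (x + c) * exp (-x)) (Ioi 0) := by
    intro x (hx : 0 < x)
    dsimp only
    have hfactor : 1 - α * (1 - x) = α * (x + c) := by linear_combination -hαc
    rw [hfactor, log_mul hα0.ne' (by positivity), add_mul]
  rw [setIntegral_congr_fun measurableSet_Ioi hintegrand,
    integral_add ((integrableOn_exp_neg_Ioi 0).const_mul _) (integrableOn_log_add_mul_exp_neg hc),
    integral_const_mul, integral_exp_neg_Ioi_zero, integral_log_add_mul_exp_neg hc, ← hαc,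
    log_mul hα0.ne' hc.ne']
  ring
end
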